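/- Let A be an n×N real matrix, I ⊆ {1,…,N} an index set, ω ∈ (0,1), and L ≥ 0, U ≥ 0 such that (1−L)‖x‖₂² ≤ ‖Ax‖₂² ≤ (1+U)‖x‖₂² for every x ∈ ℝ^N supported in I. Then for every u ∈ ℝ^N supported in I, ‖u − ω·(A*(Au))_I‖₂ ≤ max{ω(1+U) − 1, 1 − ω(1−L)}·‖u‖₂. -/

import Mathlib

open Finset Matrix

noncomputable def euclNorm {α : Type*} [Fintype α] (v : α → ℝ) : ℝ :=
  Real.sqrt (∑ i, (v i) ^ 2)

def restr {N : ℕ} (I : Finset (Fin N)) (x : Fin N → ℝ) : Fin N → ℝ :=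
  fun i => if i ∈ I then x i else 0

def sparse {N : ℕ} (k : ℕ) (x : Fin N → ℝ) : Prop :=
  (Finset.univ.filter fun i => x i ≠ 0).card ≤ k

def aRIP {n N : ℕ} (A : Matrix (Fin n) (Fin N) ℝ) (m : ℕ) (L U : ℝ) : Prop :=
  ∀ x : Fin N → ℝ, sparse m x →
    (1 - L) * euclNorm x ^ 2 ≤ euclNorm (A.mulVec x) ^ 2 ∧
      euclNorm (A.mulVec x) ^ 2 ≤ (1 + U) * euclNorm x ^ 2

def selects {N : ℕ} (T : Finset (Fin N)) (v : Fin N → ℝ) : Prop :=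
  ∀ i ∈ T, ∀ j ∉ T, |v j| ≤ |v i|

def subCols {n N : ℕ} (A : Matrix (Fin n) (Fin N) ℝ) (I : Finset (Fin N)) :
    Matrix (Fin n) I ℝ :=
  fun r c => A r (c : Fin N)

noncomputable def gram {n N : ℕ} (A : Matrix (Fin n) (Fin N) ℝ) (I : Finset (Fin N)) :
    Matrix I I ℝ :=
  (subCols A I)ᵀ * subCols A I

noncomputable def pinvApply {n N : ℕ} (A : Matrix (Fin n) (Fin N) ℝ) (I : Finset (Fin N))
    (y : Fin n → ℝ) : I → ℝ :=
  ((gram A I)⁻¹ * (subCols A I)ᵀ).mulVec y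

noncomputable def pinvVec {n N : ℕ} (A : Matrix (Fin n) (Fin N) ℝ) (I : Finset (Fin N))
    (y : Fin n → ℝ) : Fin N → ℝ :=
  fun i => if h : i ∈ I then pinvApply A I y ⟨i, h⟩ else 0

/-!
On vectors supported in `I`, the map `u ↦ u - ω (A*(Au))_I` is the restriction of the symmetric
matrix `P (1 - ω A*A) P`, `P` the coordinate projection onto `I`. Its quadratic form at `x` is
`‖Px‖² - ω ‖APx‖²`, which the two-sided bound on `‖APx‖²` squeezes between `(1 - ω(1+U)) ‖Px‖²`
and `(1 - ω(1-L)) ‖Px‖²`. The operator norm of a symmetric operator is the supremum of its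
Rayleigh quotient in absolute value, hence is at most `max (ω(1+U) - 1) (1 - ω(1-L))`.
-/

open scoped RealInnerProductSpace

lemma norm_apply_le_of_abs_inner_self_le {E : Type*} [NormedAddCommGroup E]
    [InnerProductSpace ℝ E] {T : E →L[ℝ] E} (hT : (T : E →ₗ[ℝ] E).IsSymmetric) {c : ℝ}
    (hc : 0 ≤ c) (h : ∀ x, |⟪T x, x⟫| ≤ c * ‖x‖ ^ 2) (x : E) : ‖T x‖ ≤ c * ‖x‖ := by
  refine T.le_of_opNorm_le ?_ x
  rw [T.norm_eq_iSup_rayleighQuotient hT]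
  refine ciSup_le fun y => ?_
  rcases eq_or_ne y 0 with rfl | hy
  · simpa
  · rw [ContinuousLinearMap.rayleighQuotient, ContinuousLinearMap.reApplyInnerSelf_apply, abs_div,
      abs_sq, div_le_iff₀ (by positivity)]
    simpa using h y

lemma abs_sub_mul_le_max {s t ω L U : ℝ} (hω : 0 ≤ ω) (hs : 0 ≤ s)
    (hL : (1 - L) * s ≤ t) (hU : t ≤ (1 + U) * s) :
    |s - ω * t| ≤ max (ω * (1 + U) - 1) (1 - ω * (1 - L)) * s := by
  rw [abs_le]
  constructor
  · nlinarith [le_max_left (ω * (1 + U) - 1) (1 - ω * (1 - L)), mul_le_mul_of_nonneg_left hU hω]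
  · nlinarith [le_max_right (ω * (1 + U) - 1) (1 - ω * (1 - L)), mul_le_mul_of_nonneg_left hL hω]

lemma norm_eq_euclNorm {α : Type*} [Fintype α] (x : EuclideanSpace ℝ α) :
    ‖x‖ = euclNorm x.ofLp := by
  simp [EuclideanSpace.norm_eq, euclNorm]

lemma euclNorm_sq {α : Type*} [Fintype α] (v : α → ℝ) : euclNorm v ^ 2 = v ⬝ᵥ v := by
  rw [euclNorm, Real.sq_sqrt (Finset.sum_nonneg fun i _ => sq_nonneg _)]
  simp [dotProduct, sq]

section

variable {N : ℕ} (I : Finset (Fin N))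

def restrMatrix : Matrix (Fin N) (Fin N) ℝ :=
  diagonal fun i => if i ∈ I then 1 else 0

lemma restrMatrix_mulVec (x : Fin N → ℝ) : restrMatrix I *ᵥ x = restr I x := by
  ext i
  simp [restrMatrix, restr, mulVec_diagonal]

lemma isHermitian_restrMatrix : (restrMatrix I).IsHermitian :=
  isHermitian_diagonal _

lemma restr_apply_of_notMem {x : Fin N → ℝ} {i : Fin N} (hi : i ∉ I) : restr I x i = 0 :=
  if_neg hi

lemma restr_eq_self {u : Fin N → ℝ} (hu : ∀ i ∉ I, u i = 0) : restr I u = u := by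
  ext i
  by_cases hi : i ∈ I <;> simp [restr, hi, hu]

lemma euclNorm_restr_le (x : Fin N → ℝ) : euclNorm (restr I x) ≤ euclNorm x := by
  refine Real.sqrt_le_sqrt (Finset.sum_le_sum fun i _ => ?_)
  by_cases hi : i ∈ I <;> simp [restr, hi, sq_nonneg]

lemma dotProduct_restr (x y : Fin N → ℝ) : x ⬝ᵥ restr I y = restr I x ⬝ᵥ y := by
  simp only [dotProduct, restr, mul_ite, ite_mul, mul_zero, zero_mul]

end

section

variable {n N : ℕ} (A : Matrix (Fin n) (Fin N) ℝ) (I : Finset (Fin N)) (ω : ℝ)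

def landweberMatrix : Matrix (Fin N) (Fin N) ℝ :=
  restrMatrix I * (1 - ω • (Aᵀ * A)) * restrMatrix I

lemma isHermitian_landweberMatrix : (landweberMatrix A I ω).IsHermitian := by
  have hX : (1 - ω • (Aᵀ * A)).IsHermitian :=
    isHermitian_one.sub (IsHermitian.smul (by simpa using isHermitian_conjTranspose_mul_self A)
      (IsSelfAdjoint.all ω))
  have := isHermitian_mul_mul_conjTranspose (restrMatrix I) hX
  rwa [(isHermitian_restrMatrix I).eq] at this

lemma landweberMatrix_mulVec (x : Fin N → ℝ) :
    landweberMatrix A I ω *ᵥ x = restr I (restr I x - ω • Aᵀ *ᵥ (A *ᵥ restr I x)) := by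
  simp only [landweberMatrix, ← mulVec_mulVec, restrMatrix_mulVec, sub_mulVec, one_mulVec,
    smul_mulVec]

lemma landweberMatrix_mulVec_of_support {u : Fin N → ℝ} (hu : ∀ i ∉ I, u i = 0) :
    landweberMatrix A I ω *ᵥ u = fun i => u i - ω * restr I (Aᵀ *ᵥ (A *ᵥ u)) i := by
  ext i
  by_cases hi : i ∈ I <;> simp [landweberMatrix_mulVec, restr_eq_self I hu, restr, hi, hu]

lemma dotProduct_landweberMatrix_mulVec (x : Fin N → ℝ) :
    x ⬝ᵥ landweberMatrix A I ω *ᵥ x =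
      euclNorm (restr I x) ^ 2 - ω * euclNorm (A *ᵥ restr I x) ^ 2 := by
  rw [landweberMatrix_mulVec, dotProduct_restr, dotProduct_sub, dotProduct_smul, dotProduct_mulVec,
    vecMul_transpose, euclNorm_sq, euclNorm_sq, smul_eq_mul]

end

lemma abs_inner_toEuclideanCLM_landweberMatrix_le {n N : ℕ} (A : Matrix (Fin n) (Fin N) ℝ)
    (I : Finset (Fin N)) {ω L U : ℝ} (hω : 0 ≤ ω)
    (hc : 0 ≤ max (ω * (1 + U) - 1) (1 - ω * (1 - L)))
    (hA : ∀ x : Fin N → ℝ, (∀ i ∉ I, x i = 0) →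
      (1 - L) * euclNorm x ^ 2 ≤ euclNorm (A.mulVec x) ^ 2 ∧
        euclNorm (A.mulVec x) ^ 2 ≤ (1 + U) * euclNorm x ^ 2)
    (x : EuclideanSpace ℝ (Fin N)) :
    |⟪toEuclideanCLM (𝕜 := ℝ) (landweberMatrix A I ω) x, x⟫| ≤
      max (ω * (1 + U) - 1) (1 - ω * (1 - L)) * ‖x‖ ^ 2 := by
  obtain ⟨hlow, hup⟩ := hA (restr I x.ofLp) fun i hi => restr_apply_of_notMem I hi
  rw [real_inner_comm, inner_toEuclideanCLM, dotProduct_landweberMatrix_mulVec, norm_eq_euclNorm]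
  calc _ ≤ max (ω * (1 + U) - 1) (1 - ω * (1 - L)) * euclNorm (restr I x.ofLp) ^ 2 :=
        abs_sub_mul_le_max hω (sq_nonneg _) hlow hup
    _ ≤ _ := by gcongr; exacts [Real.sqrt_nonneg _, euclNorm_restr_le I x.ofLp]

theorem stmt5_general {n N : ℕ} (A : Matrix (Fin n) (Fin N) ℝ) (I : Finset (Fin N))
    (ω : ℝ) (hω0 : 0 < ω) (hω1 : ω < 1)
    (L U : ℝ) (hL : 0 ≤ L)
    (hA : ∀ x : Fin N → ℝ, (∀ i ∉ I, x i = 0) →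
      (1 - L) * euclNorm x ^ 2 ≤ euclNorm (A.mulVec x) ^ 2 ∧
        euclNorm (A.mulVec x) ^ 2 ≤ (1 + U) * euclNorm x ^ 2) :
    ∀ u : Fin N → ℝ, (∀ i ∉ I, u i = 0) →
      euclNorm (fun i => u i - ω * restr I (Aᵀ.mulVec (A.mulVec u)) i) ≤
        max (ω * (1 + U) - 1) (1 - ω * (1 - L)) * euclNorm u := by
  intro u hu
  have hc : 0 ≤ max (ω * (1 + U) - 1) (1 - ω * (1 - L)) :=
    le_max_of_le_right (by nlinarith)
  have key := norm_apply_le_of_abs_inner_self_le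
    ((isHermitian_landweberMatrix A I ω).isSelfAdjoint.map
      (toEuclideanCLM (n := Fin N) (𝕜 := ℝ))).isSymmetric hc
    (abs_inner_toEuclideanCLM_landweberMatrix_le A I hω0.le hc hA) (WithLp.toLp 2 u)
  rwa [toEuclideanCLM_toLp, landweberMatrix_mulVec_of_support A I ω hu, norm_eq_euclNorm,
    norm_eq_euclNorm] at key

theorem stmt5 {n N : ℕ} (A : Matrix (Fin n) (Fin N) ℝ) (I : Finset (Fin N))
    (ω : ℝ) (hω0 : 0 < ω) (hω1 : ω < 1)
    (L U : ℝ) (hL : 0 ≤ L) (hU : 0 ≤ U)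
    (hA : ∀ x : Fin N → ℝ, (∀ i ∉ I, x i = 0) →
      (1 - L) * euclNorm x ^ 2 ≤ euclNorm (A.mulVec x) ^ 2 ∧
        euclNorm (A.mulVec x) ^ 2 ≤ (1 + U) * euclNorm x ^ 2) :
    ∀ u : Fin N → ℝ, (∀ i ∉ I, u i = 0) →
      euclNorm (fun i => u i - ω * restr I (Aᵀ.mulVec (A.mulVec u)) i) ≤
        max (ω * (1 + U) - 1) (1 - ω * (1 - L)) * euclNorm u :=
  stmt5_general A I ω hω0 hω1 L U hL hA
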